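/- arXiv:1306.6796 — 10 statements merged into one kernel-verified Lean document; each statement's English description precedes it below -/
import Mathlib

section
/- Let G be a finite abelian group with dual group Ĝ, and let S ⊆ G and T ⊆ Ĝ be nonempty subsets. Suppose that for every y ∈ Ĝ, |(1/|S|) ∑_{v ∈ S} y(v)|² = (1/|T|) · #{(w,w') ∈ T × T : y = w - w'}. Then |S| · |T| = |G|. -/
open scoped Classical

/-- Pointwise formal duality condition for `S ⊆ G` and `T ⊆ Ĝ`, where the dual group `Ĝ`
is realized as the group `AddChar G ℂ` of complex-valued additive characters of `G`
(whose values lie on the unit circle), written additively. -/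
def IsFormallyDual {G : Type*} [AddCommGroup G] [Fintype G]
    (S : Finset G) (T : Finset (AddChar G ℂ)) : Prop :=
  ∀ y : AddChar G ℂ,
    ‖(S.card : ℂ)⁻¹ * ∑ v ∈ S, y v‖ ^ 2 =
      (T.card : ℝ)⁻¹ * ((T ×ˢ T).filter fun p => y = p.1 - p.2).card

/-!
Sum the duality condition over all characters `y`. By orthogonality of characters
(Parseval for the indicator of `S`) the left-hand sides add up to `|S|⁻² · |S| |G|`, while
every pair of `T × T` is counted for exactly one `y`, so the right-hand sides add up to
`|T|⁻¹ · |T|²`. Hence `|G| / |S| = |T|`.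
-/

open Finset

lemma AddChar.sum_norm_sum_apply_sq {G : Type*} [AddCommGroup G] [Fintype G] (s : Finset G) :
    ∑ ψ : AddChar G ℂ, ‖∑ x ∈ s, ψ x‖ ^ 2 = #s * Fintype.card G := by
  have expand (ψ : AddChar G ℂ) :
      ((‖∑ x ∈ s, ψ x‖ ^ 2 : ℝ) : ℂ) = ∑ x ∈ s, ∑ x' ∈ s, ψ (x - x') := by
    rw [Complex.ofReal_pow, ← Complex.mul_conj', map_sum, sum_mul_sum]
    simp_rw [← AddChar.map_neg_eq_conj, ← AddChar.map_add_eq_mul, sub_eq_add_neg]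
  apply Complex.ofReal_injective
  rw [Complex.ofReal_sum, sum_congr rfl fun ψ _ => expand ψ, sum_comm]
  simp_rw [sum_comm (γ := AddChar G ℂ), AddChar.sum_apply_eq_ite, sub_eq_zero]
  simp

lemma Finset.sum_card_filter_eq_sub {A : Type*} [AddGroup A] [Fintype A] [DecidableEq A]
    (T : Finset A) : ∑ a : A, #{p ∈ T ×ˢ T | a = p.1 - p.2} = #T * #T := by
  rw [← card_product, card_eq_sum_card_fiberwise (f := fun p => p.1 - p.2) (t := univ)
    fun _ _ => mem_univ _]
  simp_rw [eq_comm]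

theorem stmt_0 {G : Type*} [AddCommGroup G] [Fintype G]
    (S : Finset G) (T : Finset (AddChar G ℂ))
    (hS : S.Nonempty) (hT : T.Nonempty)
    (h : IsFormallyDual S T) :
    S.card * T.card = Fintype.card G := by
  have hsum := sum_congr rfl fun y (_ : y ∈ univ) => h y
  simp_rw [norm_mul, mul_pow, norm_inv, Complex.norm_natCast, ← mul_sum,
    AddChar.sum_norm_sum_apply_sq] at hsum
  rw [← Nat.cast_sum, sum_card_filter_eq_sub, Nat.cast_mul] at hsum
  have hS₀ : (#S : ℝ) ≠ 0 := by exact_mod_cast hS.card_pos.ne'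
  have hT₀ : (#T : ℝ) ≠ 0 := by exact_mod_cast hT.card_pos.ne'
  have hcard : (#S * #T : ℝ) = Fintype.card G := by
    calc (#S * #T : ℝ) = #S * ((#T : ℝ)⁻¹ * (#T * #T)) := by field_simp
      _ = #S * ((#S : ℝ)⁻¹ ^ 2 * (#S * Fintype.card G)) := by rw [hsum]
      _ = Fintype.card G := by field_simp
  exact_mod_cast hcard
end

section
/- Let G be a finite abelian group with dual Ĝ, and let S ⊆ G and T ⊆ Ĝ be nonempty subsets satisfying: for every function f : G → ℂ, (1/|S|^{3/2}) ∑_{v,v' ∈ S} f(v - v') = (1/|T|^{3/2}) ∑_{w,w' ∈ T} f̂(w - w'), where f̂(y) = (1/√|G|) ∑_{x ∈ G} f(x) · y(-x). Then |S| · |T| = |G|. -/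
/-!
Test the hypothesis on the indicator of `0 ∈ G`. On the left only the diagonal `v = v'`
contributes, giving `|S| / |S|^{3/2} = |S|^{-1/2}`; the Fourier transform of the indicator is
the constant `|G|^{-1/2}`, so the right side is `|T|^2 / (|T|^{3/2} √|G|) = √|T| / √|G|`.
Hence `√|G| = √|S| √|T|`.
-/

noncomputable def fourierTransform {G : Type*} [AddCommGroup G] [Fintype G]
    (f : G → ℂ) (y : AddChar G ℂ) : ℂ :=
  ((Real.sqrt (Fintype.card G) : ℂ))⁻¹ * ∑ x : G, f x * y (-x)

theorem Finset.sum_sum_single_zero_sub {G R : Type*} [AddGroup G] [DecidableEq G]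
    [AddCommMonoidWithOne R] (S : Finset G) :
    ∑ v ∈ S, ∑ v' ∈ S, (Pi.single 0 1 : G → R) (v - v') = S.card := by
  have diagonal (v : G) (hv : v ∈ S) : ∑ v' ∈ S, (Pi.single 0 1 : G → R) (v - v') = 1 := by
    simp only [Pi.single_apply, sub_eq_zero, Finset.sum_ite_eq, hv, if_true]
  rw [Finset.sum_congr rfl diagonal, Finset.sum_const, nsmul_one]

theorem fourierTransform_single_zero {G : Type*} [AddCommGroup G] [Fintype G] [DecidableEq G]
    (y : AddChar G ℂ) :
    fourierTransform (Pi.single 0 1) y = ((Real.sqrt (Fintype.card G) : ℂ))⁻¹ := by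
  rw [fourierTransform, Finset.sum_eq_single 0 (fun x _ hx => by simp [hx]) (by simp)]
  simp

theorem Real.rpow_three_halves {a : ℝ} (ha : 0 ≤ a) : a ^ (3 / 2 : ℝ) = a * √a := by
  rw [show (3 / 2 : ℝ) = 1 + 1 / 2 by norm_num, Real.rpow_add' ha (by norm_num), Real.rpow_one,
    Real.sqrt_eq_rpow]

theorem Real.mul_eq_of_inv_rpow_three_halves_mul_eq {a b c : ℝ} (ha : 0 < a) (hb : 0 < b)
    (hc : 0 < c) (h : (a ^ (3 / 2 : ℝ))⁻¹ * a = (b ^ (3 / 2 : ℝ))⁻¹ * (b ^ 2 * (√c)⁻¹)) :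
    a * b = c := by
  rw [Real.rpow_three_halves ha.le, Real.rpow_three_halves hb.le] at h
  have hsb : √b ≠ 0 := (Real.sqrt_pos.2 hb).ne'
  field_simp [(Real.sqrt_pos.2 ha).ne', (Real.sqrt_pos.2 hc).ne'] at h
  have sqrt_eq : √c = √a * √b :=
    mul_left_cancel₀ hsb (by rw [h, mul_left_comm, Real.mul_self_sqrt hb.le])
  rw [← Real.sq_sqrt hc.le, sqrt_eq, mul_pow, Real.sq_sqrt ha.le, Real.sq_sqrt hb.le]

theorem stmt_1 {G : Type*} [AddCommGroup G] [Fintype G]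
    (S : Finset G) (T : Finset (AddChar G ℂ))
    (hS : S.Nonempty) (hT : T.Nonempty)
    (h : ∀ f : G → ℂ,
      (((S.card : ℝ) ^ ((3 : ℝ) / 2) : ℝ) : ℂ)⁻¹ * ∑ v ∈ S, ∑ v' ∈ S, f (v - v') =
      (((T.card : ℝ) ^ ((3 : ℝ) / 2) : ℝ) : ℂ)⁻¹ *
        ∑ w ∈ T, ∑ w' ∈ T, fourierTransform f (w - w')) :
    S.card * T.card = Fintype.card G := by
  classical
  have key := h (Pi.single 0 1)
  simp only [Finset.sum_sum_single_zero_sub, fourierTransform_single_zero, Finset.sum_const,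
    nsmul_eq_mul] at key
  have key_real : ((S.card : ℝ) ^ (3 / 2 : ℝ))⁻¹ * S.card =
      ((T.card : ℝ) ^ (3 / 2 : ℝ))⁻¹ * ((T.card : ℝ) ^ 2 * (√(Fintype.card G : ℝ))⁻¹) := by
    rw [pow_two, mul_assoc]
    exact_mod_cast key
  exact_mod_cast Real.mul_eq_of_inv_rpow_three_halves_mul_eq (by exact_mod_cast hS.card_pos)
    (by exact_mod_cast hT.card_pos) (by exact_mod_cast Fintype.card_pos) key_real
end

section
/- Let G be a finite abelian group with dual Ĝ. Two nonempty subsets S ⊆ G and T ⊆ Ĝ satisfy the pointwise formal duality condition (for every y ∈ Ĝ, |(1/|S|) ∑_{v ∈ S} y(v)|² = (1/|T|) · #{(w,w') ∈ T × T : y = w - w'}) if and only if they satisfy the functional formal duality condition (for every f : G → ℂ, (1/|S|^{3/2}) ∑_{v,v' ∈ S} f(v-v') = (1/|T|^{3/2}) ∑_{w,w' ∈ T} f̂(w-w'), where f̂(y) = (1/√|G|) ∑_{x ∈ G} f(x) y(-x)). -/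
open scoped Classical

/-!
Write `A(y) = ∑_{v,v' ∈ S} y(v - v') = |∑_{v ∈ S} y(v)|²` and `N(y) = diffCount T y` for the
number of representations `y = w - w'` with `w, w' ∈ T`. Then `∑_{w,w' ∈ T} f̂(w - w') =
∑_y N(y) f̂(y)`, while Fourier inversion gives `∑_y A(y) f̂(y) = √|G| ∑_{v,v' ∈ S} f(v - v')`.
Testing the functional condition on characters (whose transforms are `√|G|` times a delta)
and using inversion in the other direction, it is equivalent to `A = κ N` for an explicit
constant `κ`, just as the pointwise condition is. Each condition forces `|G| = |S| |T|`: the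
pointwise one after summing over all characters (`∑ A = |G| |S|`, `∑ N = |T|²`), the
functional one at the trivial character. Under `|G| = |S| |T|` the two constants agree.
-/

open Finset

lemma sq_ofReal_sqrt_natCast (m : ℕ) : ((√(m : ℝ) : ℝ) : ℂ) ^ 2 = m := by
  exact_mod_cast Real.sq_sqrt (Nat.cast_nonneg m)

lemma ofReal_sqrt_natCast_ne_zero {m : ℕ} (hm : 0 < m) : ((√(m : ℝ) : ℝ) : ℂ) ≠ 0 := by
  exact_mod_cast (Real.sqrt_pos.2 (Nat.cast_pos.2 hm)).ne'

lemma rpow_three_halves_natCast (m : ℕ) : (m : ℝ) ^ (3 / 2 : ℝ) = √(m : ℝ) ^ 3 := by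
  rw [Real.rpow_div_two_eq_sqrt _ (Nat.cast_nonneg m)]
  exact_mod_cast Real.rpow_natCast _ 3

lemma mul_eq_sq_mul_iff_of_eq_mul {n s t : ℕ} (hn : n = s * t) (hs : 0 < s) (ht : 0 < t)
    (x z : ℂ) :
    (t : ℂ) * x = (s : ℂ) ^ 2 * z ↔
      (((s : ℝ) ^ (3 / 2 : ℝ) : ℝ) : ℂ)⁻¹ * x =
        (((t : ℝ) ^ (3 / 2 : ℝ) : ℝ) : ℂ)⁻¹ * ((√(n : ℝ) : ℂ) * z) := by
  have ha := ofReal_sqrt_natCast_ne_zero hs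
  have hb := ofReal_sqrt_natCast_ne_zero ht
  rw [rpow_three_halves_natCast, rpow_three_halves_natCast, hn, Nat.cast_mul,
    Real.sqrt_mul (Nat.cast_nonneg _), ← sq_ofReal_sqrt_natCast s, ← sq_ofReal_sqrt_natCast t]
  push_cast
  constructor <;> intro h <;> field_simp at h ⊢ <;> linear_combination h

section DiffCount

variable {β : Type*} [AddCommGroup β] [DecidableEq β]

def diffCount (T : Finset β) (y : β) : ℕ := #{p ∈ T ×ˢ T | y = p.1 - p.2}

lemma diffCount_zero (T : Finset β) : diffCount T 0 = #T := by
  rw [diffCount, filter_congr fun p _ => eq_comm.trans sub_eq_zero, ← diag_eq_filter, diag_card]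

lemma sum_sum_sub_eq_sum_diffCount_smul [Fintype β] {M : Type*} [AddCommMonoid M]
    (T : Finset β) (g : β → M) :
    ∑ w ∈ T, ∑ w' ∈ T, g (w - w') = ∑ y, diffCount T y • g y := by
  rw [← sum_product', ← sum_fiberwise' (T ×ˢ T) (fun p => p.1 - p.2) g]
  refine sum_congr rfl fun y _ => ?_
  rw [diffCount, filter_congr fun p _ => eq_comm, sum_const]

lemma sum_diffCount [Fintype β] (T : Finset β) : ∑ y, diffCount T y = #T ^ 2 := by
  simpa [sq] using (sum_sum_sub_eq_sum_diffCount_smul T fun _ => (1 : ℕ)).symm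

end DiffCount

section Fourier

variable {G : Type*} [AddCommGroup G] [Fintype G]

lemma sq_norm_sum_addChar (S : Finset G) (y : AddChar G ℂ) :
    ((‖∑ v ∈ S, y v‖ : ℝ) : ℂ) ^ 2 = ∑ v ∈ S, ∑ v' ∈ S, y (v - v') := by
  rw [← Complex.ofReal_pow, Complex.sq_norm, ← Complex.mul_conj, map_sum, sum_mul_sum]
  simp_rw [← AddChar.map_neg_eq_conj, ← AddChar.map_add_eq_mul, ← sub_eq_add_neg]

lemma sum_addChar_sum_sum_sub (S : Finset G) :
    ∑ ψ : AddChar G ℂ, ∑ v ∈ S, ∑ v' ∈ S, ψ (v - v') = Fintype.card G * #S := by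
  simp_rw [sum_sum_sub_eq_sum_diffCount_smul S]
  rw [sum_comm]
  simp_rw [← smul_sum, AddChar.sum_apply_eq_ite, smul_ite, smul_zero, sum_ite_eq', mem_univ,
    if_true, diffCount_zero, nsmul_eq_mul, mul_comm]

lemma fourierTransform_addChar (y z : AddChar G ℂ) :
    fourierTransform y z = if y = z then (√(Fintype.card G) : ℂ) else 0 := by
  have hsum : ∑ x, y x * z (-x) = if y = z then (Fintype.card G : ℂ) else 0 := by
    simp_rw [← AddChar.sub_apply, AddChar.sum_eq_ite, sub_eq_zero]
  have hc := ofReal_sqrt_natCast_ne_zero (Fintype.card_pos (α := G))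
  rw [fourierTransform, hsum, ← sq_ofReal_sqrt_natCast]
  split_ifs
  · field_simp
  · simp

lemma sum_fourierTransform_mul_apply (f : G → ℂ) (x : G) :
    ∑ ψ : AddChar G ℂ, fourierTransform f ψ * ψ x = √(Fintype.card G) * f x := by
  have hc := ofReal_sqrt_natCast_ne_zero (Fintype.card_pos (α := G))
  have horth : ∑ z, f z * ∑ ψ : AddChar G ℂ, ψ (x - z) = Fintype.card G * f x := by
    simp_rw [AddChar.sum_apply_eq_ite, sub_eq_zero, mul_ite, mul_zero, sum_ite_eq, mem_univ,
      if_true, mul_comm]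
  calc ∑ ψ : AddChar G ℂ, fourierTransform f ψ * ψ x
      = (√(Fintype.card G) : ℂ)⁻¹ * ∑ z, f z * ∑ ψ : AddChar G ℂ, ψ (x - z) := by
        simp_rw [fourierTransform, mul_sum, sum_mul, sub_eq_add_neg, AddChar.map_add_eq_mul]
        rw [sum_comm]
        exact sum_congr rfl fun z _ => sum_congr rfl fun ψ _ => by ring
    _ = √(Fintype.card G) * f x := by
        rw [horth, ← sq_ofReal_sqrt_natCast]
        field_simp

lemma sq_norm_average_addChar_eq_iff {S : Finset G} {T : Finset (AddChar G ℂ)}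
    (hS : S.Nonempty) (hT : T.Nonempty) (y : AddChar G ℂ) :
    ‖(#S : ℂ)⁻¹ * ∑ v ∈ S, y v‖ ^ 2 = (#T : ℝ)⁻¹ * diffCount T y ↔
      (#T : ℂ) * ∑ v ∈ S, ∑ v' ∈ S, y (v - v') = (#S : ℂ) ^ 2 * diffCount T y := by
  have hs : (#S : ℂ) ≠ 0 := Nat.cast_ne_zero.2 hS.card_pos.ne'
  have ht : (#T : ℂ) ≠ 0 := Nat.cast_ne_zero.2 hT.card_pos.ne'
  rw [norm_mul, mul_pow, ← Complex.ofReal_inj]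
  push_cast
  rw [sq_norm_sum_addChar, norm_inv, Complex.norm_natCast]
  push_cast
  rw [inv_pow, inv_mul_eq_div, inv_mul_eq_div, div_eq_div_iff (pow_ne_zero 2 hs) ht]
  constructor <;> intro h <;> linear_combination h

lemma forall_sum_sub_eq_sum_fourierTransform_iff (S : Finset G) (T : Finset (AddChar G ℂ))
    (α β : ℂ) :
    (∀ f : G → ℂ, α * ∑ v ∈ S, ∑ v' ∈ S, f (v - v') =
      β * ∑ w ∈ T, ∑ w' ∈ T, fourierTransform f (w - w')) ↔
    ∀ y : AddChar G ℂ, α * ∑ v ∈ S, ∑ v' ∈ S, y (v - v') =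
      β * ((√(Fintype.card G) : ℂ) * diffCount T y) := by
  have hT (f : G → ℂ) : ∑ w ∈ T, ∑ w' ∈ T, fourierTransform f (w - w') =
      ∑ y, (diffCount T y : ℂ) * fourierTransform f y := by
    simp_rw [sum_sum_sub_eq_sum_diffCount_smul T, nsmul_eq_mul]
  have hc := ofReal_sqrt_natCast_ne_zero (Fintype.card_pos (α := G))
  refine ⟨fun h y => ?_, fun h f => ?_⟩
  · rw [h, hT]
    simp_rw [fourierTransform_addChar, mul_ite, mul_zero, sum_ite_eq, mem_univ, if_true, mul_comm]
  · have h' (y : AddChar G ℂ) : β * diffCount T y =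
        (√(Fintype.card G) : ℂ)⁻¹ * (α * ∑ v ∈ S, ∑ v' ∈ S, y (v - v')) := by
      rw [h]
      field_simp
    symm
    calc β * ∑ w ∈ T, ∑ w' ∈ T, fourierTransform f (w - w')
        = ∑ y, β * diffCount T y * fourierTransform f y := by
          rw [hT, mul_sum]
          simp_rw [mul_assoc]
      _ = ∑ y, (√(Fintype.card G) : ℂ)⁻¹ * α *
            ((∑ v ∈ S, ∑ v' ∈ S, y (v - v')) * fourierTransform f y) :=
          sum_congr rfl fun y _ => by rw [h' y]; ring
      _ = (√(Fintype.card G) : ℂ)⁻¹ * α *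
            ∑ v ∈ S, ∑ v' ∈ S, ∑ y : AddChar G ℂ, fourierTransform f y * y (v - v') := by
          rw [← mul_sum]
          congr 1
          simp_rw [sum_mul]
          rw [sum_comm]
          refine sum_congr rfl fun v _ => ?_
          rw [sum_comm]
          exact sum_congr rfl fun _ _ => sum_congr rfl fun _ _ => mul_comm _ _
      _ = α * ∑ v ∈ S, ∑ v' ∈ S, f (v - v') := by
          simp_rw [sum_fourierTransform_mul_apply, ← mul_sum]
          field_simp

lemma card_eq_mul_of_forall_mul_eq_sq_mul {S : Finset G} {T : Finset (AddChar G ℂ)}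
    (hS : S.Nonempty) (hT : T.Nonempty)
    (h : ∀ y : AddChar G ℂ,
      (#T : ℂ) * ∑ v ∈ S, ∑ v' ∈ S, y (v - v') = (#S : ℂ) ^ 2 * diffCount T y) :
    Fintype.card G = #S * #T := by
  have hs : (#S : ℂ) ≠ 0 := Nat.cast_ne_zero.2 hS.card_pos.ne'
  have ht : (#T : ℂ) ≠ 0 := Nat.cast_ne_zero.2 hT.card_pos.ne'
  have hsum := sum_congr rfl fun y (_ : y ∈ univ) => h y
  rw [← mul_sum, ← mul_sum, sum_addChar_sum_sum_sub, ← Nat.cast_sum, sum_diffCount] at hsum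
  have : (Fintype.card G : ℂ) = #S * #T := by
    apply mul_left_cancel₀ (mul_ne_zero hs ht)
    push_cast at hsum
    linear_combination hsum
  exact_mod_cast this

lemma card_eq_mul_of_forall_addChar {S : Finset G} {T : Finset (AddChar G ℂ)}
    (hS : S.Nonempty) (hT : T.Nonempty)
    (h : ∀ y : AddChar G ℂ,
      (((#S : ℝ) ^ (3 / 2 : ℝ) : ℝ) : ℂ)⁻¹ * ∑ v ∈ S, ∑ v' ∈ S, y (v - v') =
        (((#T : ℝ) ^ (3 / 2 : ℝ) : ℝ) : ℂ)⁻¹ * ((√(Fintype.card G) : ℂ) * diffCount T y)) :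
    Fintype.card G = #S * #T := by
  have ha := ofReal_sqrt_natCast_ne_zero hS.card_pos
  have hb := ofReal_sqrt_natCast_ne_zero hT.card_pos
  have h0 := h 0
  simp only [AddChar.zero_apply, sum_const, nsmul_eq_mul, mul_one, diffCount_zero] at h0
  rw [rpow_three_halves_natCast, rpow_three_halves_natCast, ← sq_ofReal_sqrt_natCast #S,
    ← sq_ofReal_sqrt_natCast #T] at h0
  push_cast at h0
  field_simp at h0
  have : (Fintype.card G : ℂ) = #S * #T := by
    rw [← sq_ofReal_sqrt_natCast, ← h0, ← sq_ofReal_sqrt_natCast #S, ← sq_ofReal_sqrt_natCast #T]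
    ring
  exact_mod_cast this

end Fourier

theorem stmt_2 {G : Type*} [AddCommGroup G] [Fintype G]
    (S : Finset G) (T : Finset (AddChar G ℂ))
    (hS : S.Nonempty) (hT : T.Nonempty) :
    (∀ y : AddChar G ℂ,
      ‖(S.card : ℂ)⁻¹ * ∑ v ∈ S, y v‖ ^ 2 =
        (T.card : ℝ)⁻¹ * ((T ×ˢ T).filter fun p => y = p.1 - p.2).card) ↔
    (∀ f : G → ℂ,
      (((S.card : ℝ) ^ ((3 : ℝ) / 2) : ℝ) : ℂ)⁻¹ * ∑ v ∈ S, ∑ v' ∈ S, f (v - v') =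
      (((T.card : ℝ) ^ ((3 : ℝ) / 2) : ℝ) : ℂ)⁻¹ *
        ∑ w ∈ T, ∑ w' ∈ T, fourierTransform f (w - w')) := by
  refine (forall_congr' (sq_norm_average_addChar_eq_iff hS hT)).trans ?_
  rw [forall_sum_sub_eq_sum_fourierTransform_iff]
  have key (hn : Fintype.card G = #S * #T) :=
    mul_eq_sq_mul_iff_of_eq_mul hn hS.card_pos hT.card_pos
  exact ⟨fun h y => (key (card_eq_mul_of_forall_mul_eq_sq_mul hS hT h) _ _).1 (h y),
    fun h y => (key (card_eq_mul_of_forall_addChar hS hT h) _ _).2 (h y)⟩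
end

section
/- Let G₁, G₂ be finite abelian groups and suppose S₁ ⊆ G₁ is formally dual to T₁ ⊆ Ĝ₁ and S₂ ⊆ G₂ is formally dual to T₂ ⊆ Ĝ₂ (in the pointwise sense: for all y ∈ Ĝᵢ, |(1/|Sᵢ|) ∑_{v ∈ Sᵢ} y(v)|² = (1/|Tᵢ|) · #{(w,w') ∈ Tᵢ² : y = w-w'}). Then S₁ × S₂ ⊆ G₁ × G₂ is formally dual to T₁ × T₂ ⊆ Ĝ₁ × Ĝ₂, identifying the dual of G₁ × G₂ with Ĝ₁ × Ĝ₂. -/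
/-!
Every character of `G₁ × G₂` is `y₁.prodChar y₂` for unique `y₁ ∈ Ĝ₁`, `y₂ ∈ Ĝ₂`. Its average
over `S₁ × S₂` is the product of the averages of `y₁` over `S₁` and `y₂` over `S₂`, and its
number of representations as a difference in `T₁ × T₂` is the product of the numbers of
representations of `y₁` in `T₁` and `y₂` in `T₂`. Hence both sides of the duality identity are
multiplicative, and the identities for the factors multiply.
-/

open scoped Classical

/-- The character of `G₁ × G₂` corresponding to a pair of characters of `G₁` and `G₂`,
realizing the identification of the dual of `G₁ × G₂` with `Ĝ₁ × Ĝ₂`: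
`(y₁, y₂)(x₁, x₂) = y₁(x₁) y₂(x₂)`. -/
def AddChar.prodChar {G₁ G₂ : Type*} [AddCommGroup G₁] [AddCommGroup G₂]
    (y₁ : AddChar G₁ ℂ) (y₂ : AddChar G₂ ℂ) : AddChar (G₁ × G₂) ℂ :=
  y₁.compAddMonoidHom (AddMonoidHom.fst G₁ G₂) *
    y₂.compAddMonoidHom (AddMonoidHom.snd G₁ G₂)

open Finset
open scoped BigOperators

namespace AddChar

variable {G₁ G₂ : Type*} [AddCommGroup G₁] [AddCommGroup G₂]

lemma prodChar_apply (y₁ : AddChar G₁ ℂ) (y₂ : AddChar G₂ ℂ) (x : G₁ × G₂) :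
    y₁.prodChar y₂ x = y₁ x.1 * y₂ x.2 := rfl

def prodCharEquiv : AddChar G₁ ℂ × AddChar G₂ ℂ ≃+ AddChar (G₁ × G₂) ℂ where
  toFun p := p.1.prodChar p.2
  invFun y := (y.compAddMonoidHom (AddMonoidHom.inl G₁ G₂),
    y.compAddMonoidHom (AddMonoidHom.inr G₁ G₂))
  left_inv p := by ext <;> simp [prodChar_apply]
  right_inv y := by ext x; simp [prodChar_apply, ← map_add_eq_mul]
  map_add' p q := by ext x; simp only [Prod.fst_add, Prod.snd_add, prodChar_apply, add_apply]; ring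

lemma prodCharEquiv_apply (p : AddChar G₁ ℂ × AddChar G₂ ℂ) :
    prodCharEquiv p = p.1.prodChar p.2 := rfl

lemma expect_prodChar {S₁ : Finset G₁} {S₂ : Finset G₂} (y₁ : AddChar G₁ ℂ)
    (y₂ : AddChar G₂ ℂ) :
    𝔼 v ∈ S₁ ×ˢ S₂, y₁.prodChar y₂ v = (𝔼 v ∈ S₁, y₁ v) * 𝔼 v ∈ S₂, y₂ v := by
  simp only [prodChar_apply]
  rw [expect_product, expect_mul_expect]

end AddChar

namespace Finset

variable {A B : Type*}

noncomputable def subReprCount [Sub A] (T : Finset A) (a : A) : ℕ :=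
  #{p ∈ T ×ˢ T | a = p.1 - p.2}

lemma subReprCount_product [Sub A] [Sub B] (T₁ : Finset A) (T₂ : Finset B) (a : A)
    (b : B) : (T₁ ×ˢ T₂).subReprCount (a, b) = T₁.subReprCount a * T₂.subReprCount b := by
  rw [subReprCount, subReprCount, subReprCount, ← card_product]
  refine card_equiv (Equiv.prodProdProdComm A B A B) fun p => ?_
  simp only [mem_filter, mem_product, Prod.ext_iff, Prod.fst_sub, Prod.snd_sub,
    Equiv.prodProdProdComm_apply]
  tauto

lemma subReprCount_image {F : Type*} [AddGroup A] [AddGroup B] [FunLike F A B]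
    [AddMonoidHomClass F A B] (f : F) (hf : Function.Injective f) (T : Finset A) (a : A) :
    (T.image f).subReprCount (f a) = T.subReprCount a := by
  rw [subReprCount, subReprCount, ← prodMap_image_product, filter_image,
    card_image_of_injective _ (hf.prodMap hf)]
  simp only [Prod.map_fst, Prod.map_snd, ← map_sub, hf.eq_iff]

end Finset

lemma isFormallyDual_iff {G : Type*} [AddCommGroup G] [Fintype G] (S : Finset G)
    (T : Finset (AddChar G ℂ)) :
    IsFormallyDual S T ↔
      ∀ y : AddChar G ℂ, ‖𝔼 v ∈ S, y v‖ ^ 2 = (#T : ℝ)⁻¹ * T.subReprCount y := by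
  simp only [IsFormallyDual, expect_eq_sum_div_card, div_eq_inv_mul, subReprCount]

theorem stmt_4 {G₁ G₂ : Type*} [AddCommGroup G₁] [Fintype G₁]
    [AddCommGroup G₂] [Fintype G₂]
    (S₁ : Finset G₁) (T₁ : Finset (AddChar G₁ ℂ))
    (S₂ : Finset G₂) (T₂ : Finset (AddChar G₂ ℂ))
    (h₁ : IsFormallyDual S₁ T₁) (h₂ : IsFormallyDual S₂ T₂) :
    IsFormallyDual (S₁ ×ˢ S₂) ((T₁ ×ˢ T₂).image fun p => p.1.prodChar p.2) := by
  rw [isFormallyDual_iff] at h₁ h₂ ⊢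
  intro y
  obtain ⟨⟨y₁, y₂⟩, rfl⟩ := AddChar.prodCharEquiv.surjective y
  have hT : (T₁ ×ˢ T₂).image (fun p => p.1.prodChar p.2) =
      (T₁ ×ˢ T₂).image AddChar.prodCharEquiv := rfl
  rw [hT, card_image_of_injective _ AddChar.prodCharEquiv.injective, card_product,
    subReprCount_image _ AddChar.prodCharEquiv.injective, subReprCount_product,
    AddChar.prodCharEquiv_apply, AddChar.expect_prodChar, norm_mul, mul_pow, h₁, h₂]
  push_cast
  ring
end

section
/- Let p be an odd prime and let α, β ∈ ℤ/pℤ be nonzero. Then the subsets S = {(αn², βn) : n ∈ ℤ/pℤ} and T = {(n, n²) : n ∈ ℤ/pℤ} of (ℤ/pℤ)² are formally dual with respect to the pairing ⟨(a,b),(c,d)⟩ = ζ_p^{ac+bd}: for every (c,d) ∈ (ℤ/pℤ)², |(1/p) ∑_{n ∈ ℤ/pℤ} ζ_p^{cαn² + dβn}|² = (1/p) · #{(w,w') ∈ T × T : (c,d) = w - w'}. -/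
/-!
For `c ≠ 0` the sum is a quadratic character sum `S = ∑ ψ(a n² + b n)` with `a ≠ 0`: expanding
`|S|²` and writing the second variable as `y` and the first as `y + h` gives
`∑_h ψ(a h² + b h) ∑_y ψ(2 a h y)`, where only `h = 0` survives, so `|S|² = p`. On the other side,
`x - y = c`, `x² - y² = d` forces `x + y = d / c`, so the difference `(c, d)` is attained exactly
once. For `c = 0` both sides equal `1` or `0` according as `d = 0` or not.
-/

open Complex ComplexConjugate Finset

theorem Finset.card_filter_image_product_image {α β : Type*} [DecidableEq β] {g : α → β}
    (hg : Function.Injective g) (s t : Finset α) (P : β × β → Prop) [DecidablePred P] :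
    #((s.image g ×ˢ t.image g).filter P) = #((s ×ˢ t).filter fun xy ↦ P (g xy.1, g xy.2)) := by
  rw [← prodMap_image_product, filter_image, card_image_of_injective _ (hg.prodMap hg)]
  rfl

lemma ZMod.stdAddChar_eq_exp_val {N : ℕ} [NeZero N] (x : ZMod N) :
    stdAddChar x = exp (2 * Real.pi * I * x.val / N) :=
  toCircle_apply x

section FiniteField

variable {F : Type*} [Field F] [Fintype F] [DecidableEq F]

theorem card_filter_sub_eq_and_sq_sub_sq_eq (hF : ringChar F ≠ 2) {c : F} (hc : c ≠ 0) (d : F) :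
    #{xy : F × F | xy.1 - xy.2 = c ∧ xy.1 ^ 2 - xy.2 ^ 2 = d} = 1 := by
  have h2 : (2 : F) ≠ 0 := Ring.two_ne_zero hF
  refine card_eq_one.mpr ⟨((c + d / c) / 2, (d / c - c) / 2), ?_⟩
  ext ⟨x, y⟩
  simp only [mem_filter, mem_univ, true_and, mem_singleton, Prod.mk.injEq]
  constructor
  · rintro ⟨rfl, rfl⟩
    have hsum : (x ^ 2 - y ^ 2) / (x - y) = x + y := by field_simp; ring
    rw [hsum]
    constructor <;> field_simp <;> ring
  · rintro ⟨rfl, rfl⟩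
    constructor <;> field_simp <;> ring

theorem card_filter_sub_eq_zero_and_sq_sub_sq_eq (d : F) :
    #{xy : F × F | xy.1 - xy.2 = 0 ∧ xy.1 ^ 2 - xy.2 ^ 2 = d} =
      if d = 0 then Fintype.card F else 0 := by
  split_ifs with hd
  · have hdiag : ({xy : F × F | xy.1 - xy.2 = 0 ∧ xy.1 ^ 2 - xy.2 ^ 2 = d} : Finset _) =
        (univ : Finset F).diag := by
      ext ⟨x, y⟩
      simp +contextual [sub_eq_zero, hd]
    rw [hdiag, diag_card, card_univ]
  · rw [card_eq_zero, filter_eq_empty_iff]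
    rintro ⟨x, y⟩ - ⟨hxy, rfl⟩
    rw [sub_eq_zero.mp hxy, sub_self] at hd
    exact hd rfl

theorem AddChar.norm_sum_quadratic_sq {ψ : AddChar F ℂ} (hψ : ψ.IsPrimitive)
    (hF : ringChar F ≠ 2) {a : F} (ha : a ≠ 0) (b : F) :
    ‖∑ x, ψ (a * x ^ 2 + b * x)‖ ^ 2 = Fintype.card F := by
  set f : F → F := fun x ↦ a * x ^ 2 + b * x
  have h2a : 2 * a ≠ 0 := mul_ne_zero (Ring.two_ne_zero hF) ha
  have hshift (h y : F) : f (y + h) - f y = y * (2 * a * h) + f h := by simp only [f]; ring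
  suffices ((‖∑ x, ψ (f x)‖ ^ 2 : ℝ) : ℂ) = Fintype.card F by exact_mod_cast this
  calc ((‖∑ x, ψ (f x)‖ ^ 2 : ℝ) : ℂ)
      = ∑ x, ∑ y, ψ (f x) * conj (ψ (f y)) := by
        rw [ofReal_pow, ← mul_conj', map_sum, sum_mul_sum]
    _ = ∑ h, ∑ y, ψ (f (y + h) - f y) := by
        rw [sum_comm, sum_comm (s := univ) (t := univ) (f := fun h y ↦ ψ (f (y + h) - f y))]
        refine sum_congr rfl fun y _ ↦ ?_
        rw [← Equiv.sum_comp (Equiv.addRight y)]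
        simp [sub_eq_add_neg, AddChar.map_add_eq_mul, AddChar.map_neg_eq_conj, add_comm]
    _ = ∑ h, ψ (f h) * ∑ y, ψ (y * (2 * a * h)) := by
        simp only [hshift, AddChar.map_add_eq_mul, mul_sum, mul_comm]
    _ = Fintype.card F := by
        simp [AddChar.sum_mulShift _ hψ, h2a, f]

end FiniteField

theorem stmt_6 (p : ℕ) (hp : p.Prime) (hodd : Odd p)
    (α β : ZMod p) (hα : α ≠ 0) (hβ : β ≠ 0) :
    haveI : Fact p.Prime := ⟨hp⟩
    ∀ c d : ZMod p,
      ‖(p : ℂ)⁻¹ * ∑ n : ZMod p,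
          Complex.exp (2 * Real.pi * Complex.I * ((c * α * n ^ 2 + d * β * n).val) / p)‖ ^ 2 =
        (p : ℝ)⁻¹ * (((Finset.univ.image fun n : ZMod p => (n, n ^ 2)) ×ˢ
            (Finset.univ.image fun n : ZMod p => (n, n ^ 2))).filter
            fun w : (ZMod p × ZMod p) × (ZMod p × ZMod p) => (c, d) = w.1 - w.2).card := by
  have : Fact p.Prime := ⟨hp⟩
  intro c d
  have hchar : ringChar (ZMod p) ≠ 2 := by
    rw [ZMod.ringChar_zmod_n]
    rintro rfl
    exact Nat.not_even_iff_odd.mpr hodd even_two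
  have hψ := ZMod.isPrimitive_stdAddChar p
  have hinj : Function.Injective fun n : ZMod p ↦ (n, n ^ 2) := fun x y h ↦ congrArg Prod.fst h
  simp only [← ZMod.stdAddChar_eq_exp_val]
  rw [card_filter_image_product_image hinj, univ_product_univ]
  simp only [Prod.mk_sub_mk, Prod.mk.injEq, eq_comm (a := c), eq_comm (a := d)]
  rcases eq_or_ne c 0 with rfl | hc
  · rw [card_filter_sub_eq_zero_and_sq_sub_sq_eq]
    rcases eq_or_ne d 0 with rfl | hd
    · simp
    · simp [mul_comm _ (_ : ZMod p), AddChar.sum_mulShift _ hψ, hd, hβ]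
  · rw [norm_mul, mul_pow, AddChar.norm_sum_quadratic_sq hψ hchar (mul_ne_zero hc hα),
      card_filter_sub_eq_and_sq_sub_sq_eq hchar hc]
    simp only [norm_inv, Complex.norm_natCast, Nat.cast_one, mul_one, ZMod.card]
    field_simp
end

section
/- Let G be a finite abelian group, H ≤ G, φ : Ĝ → Ĥ the restriction map, and suppose S ⊆ H ≤ G is formally dual to T ⊆ Ĝ. Then for every y ∈ Ĥ, the multiplicity m(y) = #(φ⁻¹(y) ∩ T) is either 0 or [G:H]. -/
/-!
Write `m y` for the number of `w ∈ T` restricting to `y` on `H`. Expanding `|∑_{w ∈ T} w x|²` and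
using orthogonality of characters, the sum of the left side of the duality condition over a
subgroup `K ⊇ S` is `|K|` times the number of pairs in `T × T` with equal restrictions to `K`,
while the right side sums to `|T|²|S|`. For `K = G` this gives `|G| |T| = |T|²|S|`, for `K = H`
it gives `|H| ∑ m(y)² = |T|²|S|`, so `∑ m(y)² = [G:H] ∑ m(y)`. Each fibre of restriction is a
coset of its kernel, which embeds into the dual of `G ⧸ H`, so `m(y) ≤ [G:H]`, and equality of
the sums forces `m(y) ∈ {0, [G:H]}` for every `y`.
-/

open scoped Classical

open Finset

namespace Finset

variable {ι κ : Type*}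

theorem sum_card_fiber_sq [Fintype κ] [DecidableEq κ] (s : Finset ι) (f : ι → κ) :
    ∑ y, #{i ∈ s | f i = y} ^ 2 = #{p ∈ s ×ˢ s | f p.1 = f p.2} := by
  rw [card_eq_sum_card_fiberwise (f := fun p => f p.1) (t := univ) fun _ _ => mem_univ _]
  refine sum_congr rfl fun y _ => ?_
  rw [sq, ← card_product, filter_filter]
  congr 1
  ext ⟨i, j⟩
  simp only [mem_product, mem_filter]
  grind

theorem card_filter_apply_eq_apply_of_injective {f : ι → κ} (hf : Function.Injective f)
    (s : Finset ι) : #{p ∈ s ×ˢ s | f p.1 = f p.2} = #s := by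
  simp_rw [hf.eq_iff]
  rw [← diag_card s]
  congr 1
  ext ⟨i, j⟩
  simp only [mem_filter, mem_product, mem_diag]
  grind

theorem eq_zero_or_eq_of_sum_sq_eq_mul_sum (s : Finset ι) {f : ι → ℕ} {c : ℕ}
    (hle : ∀ i ∈ s, f i ≤ c) (h : ∑ i ∈ s, f i ^ 2 = c * ∑ i ∈ s, f i) :
    ∀ i ∈ s, f i = 0 ∨ f i = c := by
  rw [mul_sum] at h
  have hpt := (sum_eq_sum_iff_of_le fun i hi => by
    rw [sq]; exact Nat.mul_le_mul_right _ (hle i hi)).1 h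
  intro i hi
  rcases Nat.eq_zero_or_pos (f i) with h0 | hpos
  · exact Or.inl h0
  · exact Or.inr (Nat.eq_of_mul_eq_mul_right hpos (by rw [← sq, hpt i hi]))

end Finset

namespace AddChar

variable {G : Type*} [AddCommGroup G]

def restrict (K : AddSubgroup G) : AddChar G ℂ →* AddChar K ℂ where
  toFun z := z.compAddMonoidHom K.subtype
  map_one' := rfl
  map_mul' _ _ := rfl

@[simp] theorem restrict_apply (K : AddSubgroup G) (z : AddChar G ℂ) (x : K) :
    restrict K z x = z x := rfl

theorem restrict_top_injective : Function.Injective (restrict (⊤ : AddSubgroup G)) :=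
  fun _ _ h => DFunLike.ext _ _ fun x => DFunLike.congr_fun h ⟨x, AddSubgroup.mem_top x⟩

theorem card_ker_restrict_le [Fintype G] (K : AddSubgroup G) :
    #{z | restrict K z = 1} ≤ K.index := by
  have hK : ∀ z ∈ ({z | restrict K z = 1} : Finset _), ∀ x ∈ K, toAddMonoidHomEquiv z x = 0 :=
    fun z hz x hx => by simpa using DFunLike.congr_fun (mem_filter.1 hz).2 ⟨x, hx⟩
  let descend (z : ({z | restrict K z = 1} : Finset _)) : AddChar (G ⧸ K) ℂ :=
    toAddMonoidHomEquiv.symm (QuotientAddGroup.lift K (toAddMonoidHomEquiv z.1) (hK z.1 z.2))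
  have descend_injective : Function.Injective descend := fun z w h =>
    Subtype.ext <| toAddMonoidHomEquiv.injective <| AddMonoidHom.ext fun x =>
      DFunLike.congr_fun (toAddMonoidHomEquiv.symm.injective h) (x : G ⧸ K)
  calc #{z | restrict K z = 1}
      ≤ Fintype.card (AddChar (G ⧸ K) ℂ) := by
        rw [← Fintype.card_coe]; exact Fintype.card_le_of_injective descend descend_injective
    _ = K.index := by rw [card_eq, AddSubgroup.index, Nat.card_eq_fintype_card]

theorem card_restrict_eq_le [Fintype G] (K : AddSubgroup G) (y : AddChar K ℂ) :
    #{z | restrict K z = y} ≤ K.index := by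
  by_cases hy : y ∈ Set.range (restrict K)
  · rw [MonoidHom.card_fiber_eq_of_mem_range _ hy ⟨1, map_one _⟩]
    exact card_ker_restrict_le K
  · rw [filter_false_of_mem fun z _ hz => hy ⟨z, hz⟩, card_empty]
    exact Nat.zero_le _

section Orthogonality

variable {A ι : Type*} [AddCommGroup A]

theorem sum_mul_inv_apply [Fintype A] (ψ χ : AddChar A ℂ) :
    ∑ a, (ψ * χ⁻¹) a = if ψ = χ then (Fintype.card A : ℂ) else 0 := by
  rw [sum_eq_ite]
  congr 1
  rw [show (0 : AddChar A ℂ) = 1 from rfl, mul_inv_eq_one, eq_iff_iff]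

theorem ofReal_norm_sum_apply_sq [Finite A] (T : Finset ι) (χ : ι → AddChar A ℂ) (a : A) :
    ((‖∑ i ∈ T, χ i a‖ ^ 2 : ℝ) : ℂ) = ∑ i ∈ T, ∑ j ∈ T, (χ i * (χ j)⁻¹) a := by
  rw [Complex.sq_norm, ← Complex.mul_conj, map_sum, sum_mul_sum]
  refine sum_congr rfl fun i _ => sum_congr rfl fun j _ => ?_
  rw [mul_apply, inv_apply, map_neg_eq_conj]

theorem sum_norm_sum_apply_sq_s10 [Fintype A] (T : Finset ι) (χ : ι → AddChar A ℂ) :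
    ∑ a, ‖∑ i ∈ T, χ i a‖ ^ 2 = Fintype.card A * #{p ∈ T ×ˢ T | χ p.1 = χ p.2} := by
  apply Complex.ofReal_injective
  rw [Complex.ofReal_sum]
  simp_rw [ofReal_norm_sum_apply_sq]
  rw [sum_comm]
  simp_rw [sum_comm (s := univ), sum_mul_inv_apply]
  rw [← sum_product' (f := fun i j => if χ i = χ j then (Fintype.card A : ℂ) else 0),
    sum_ite, sum_const_zero, add_zero, sum_const, nsmul_eq_mul, mul_comm]
  norm_cast

end Orthogonality

end AddChar

section FormalDuality

variable {G : Type*} [AddCommGroup G] [Fintype G]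

def IsFormalDual (S : Finset G) (T : Finset (AddChar G ℂ)) : Prop :=
  ∀ x : G, ‖∑ w ∈ T, w x‖ ^ 2 =
    (#T : ℝ) ^ 2 / #S * #{p ∈ S ×ˢ S | x = p.1 - p.2}

theorem sum_card_filter_eq_sub (K : AddSubgroup G) {S : Finset G} (hSK : ∀ v ∈ S, v ∈ K) :
    ∑ x : K, #{p ∈ S ×ˢ S | (x : G) = p.1 - p.2} = #S ^ 2 := by
  simp_rw [card_filter]
  rw [sum_comm, sq, ← card_product, card_eq_sum_ones]
  refine sum_congr rfl fun p hp => ?_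
  obtain ⟨hp₁, hp₂⟩ := mem_product.1 hp
  have hsub : p.1 - p.2 ∈ K := K.sub_mem (hSK _ hp₁) (hSK _ hp₂)
  have hiff (x : K) : (x : G) = p.1 - p.2 ↔ x = ⟨p.1 - p.2, hsub⟩ := by
    rw [Subtype.ext_iff]
  simp_rw [hiff]
  simp

theorem IsFormalDual.card_mul_card_restrict_eq {S : Finset G} {T : Finset (AddChar G ℂ)}
    (hST : IsFormalDual S T) (hS : S.Nonempty) (K : AddSubgroup G) (hSK : ∀ v ∈ S, v ∈ K) :
    Nat.card K * #{p ∈ T ×ˢ T | AddChar.restrict K p.1 = AddChar.restrict K p.2} =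
      #T ^ 2 * #S := by
  have hS₀ : (#S : ℝ) ≠ 0 := Nat.cast_ne_zero.2 hS.card_pos.ne'
  have hparseval := AddChar.sum_norm_sum_apply_sq_s10 T (AddChar.restrict K)
  simp only [AddChar.restrict_apply] at hparseval
  have hsum : ∑ x : K, ‖∑ w ∈ T, w x‖ ^ 2 = (#T : ℝ) ^ 2 / #S * (#S ^ 2 : ℕ) := by
    rw [← sum_card_filter_eq_sub K hSK, Nat.cast_sum, mul_sum]
    exact Fintype.sum_congr _ _ fun x => hST x
  rw [hparseval, ← Nat.card_eq_fintype_card] at hsum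
  have : (#T : ℝ) ^ 2 / #S * (#S ^ 2 : ℕ) = (#T ^ 2 * #S : ℕ) := by
    push_cast
    field_simp
  exact_mod_cast hsum.trans this

end FormalDuality

theorem stmt_10 {G : Type*} [AddCommGroup G] [Fintype G] (H : AddSubgroup G)
    (S : Finset G) (T : Finset (AddChar G ℂ))
    (hS : S.Nonempty) (hSH : ∀ v ∈ S, v ∈ H)
    (hdual : ∀ x : G,
      ‖∑ w ∈ T, w x‖ ^ 2 =
        (T.card : ℝ) ^ 2 / (S.card : ℝ) *
          ((S ×ˢ S).filter fun p => x = p.1 - p.2).card) :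
    ∀ y : AddChar H ℂ,
      (T.filter fun z => z.compAddMonoidHom H.subtype = y).card = 0 ∨
      (T.filter fun z => z.compAddMonoidHom H.subtype = y).card = H.index := by
  have hST : IsFormalDual S T := hdual
  intro y
  let m (y : AddChar H ℂ) : ℕ := #{z ∈ T | AddChar.restrict H z = y}
  have hG := hST.card_mul_card_restrict_eq hS ⊤ fun v _ => AddSubgroup.mem_top v
  rw [card_filter_apply_eq_apply_of_injective AddChar.restrict_top_injective,
    AddSubgroup.card_top] at hG
  have hH := hST.card_mul_card_restrict_eq hS H hSH
  rw [← sum_card_fiber_sq] at hH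
  have hT : #T = ∑ y, m y := card_eq_sum_card_fiberwise fun _ _ => mem_univ _
  have hm_le (y : AddChar H ℂ) : m y ≤ H.index :=
    (card_le_card (filter_subset_filter _ (subset_univ T))).trans (AddChar.card_restrict_eq_le H y)
  have hsq : ∑ y, m y ^ 2 = H.index * ∑ y, m y := by
    refine Nat.eq_of_mul_eq_mul_left (Nat.card_pos (α := H)) ?_
    rw [hH, ← hG, ← H.card_mul_index, hT]
    ring
  exact eq_zero_or_eq_of_sum_sq_eq_mul_sum univ (fun y _ => hm_le y) hsq y (mem_univ y)
end

section
/- Let p be an odd prime. There is no subset S of ℤ/p²ℤ whose difference set {x - y : x, y ∈ S, x ≠ y} equals exactly the set of elements of ℤ/p²ℤ that are coprime to p (each such element appearing as a difference). -/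
/-!
If the differences of `S` were exactly the units of `ℤ/p²`, reduction mod `p` would be injective
on `S`, and counting (`p(p-1)` units against `|S|(|S|-1)` ordered pairs) forces `|S| = p`. So `S`
is a complete residue system mod `p` and every unit is a difference in exactly one way. Summing
the units `u ≡ 1 (mod p)` through their representations `x - y` with `x ≡ y + 1` gives
`∑ S - ∑ S = 0`, while the symmetry `u ↦ 2 - u` of that residue class gives `2 ∑ u = 2p`,
which is nonzero in `ℤ/p²` for odd `p`.
-/

open Finset

section ResidueSystem

variable {G H : Type*} [DecidableEq H] (f : G → H) {T : Finset G}

theorem card_filter_eq_one_of_injOn [Fintype H] (hinj : Set.InjOn f T)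
    (hcard : #T = Fintype.card H) (h : H) : #(T.filter (f · = h)) = 1 := by
  have himg : T.image f = univ := eq_univ_of_card _ (by rw [card_image_of_injOn hinj, hcard])
  obtain ⟨x, hx, rfl⟩ := mem_image.mp (himg ▸ mem_univ h)
  refine card_eq_one.mpr ⟨x, ?_⟩
  ext y
  simp only [mem_filter, mem_singleton]
  exact ⟨fun ⟨hy, hxy⟩ => hinj hy hx hxy, by rintro rfl; exact ⟨hx, rfl⟩⟩

variable [AddGroup H] {M : Type*} [AddCommMonoid M]

theorem sum_filter_sub_eq_fst (hT : ∀ h, #(T.filter (f · = h)) = 1) (c : H) (φ : G → M) :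
    ∑ q ∈ (T ×ˢ T).filter (fun q => f q.1 - f q.2 = c), φ q.1 = ∑ x ∈ T, φ x := by
  rw [sum_filter, sum_product]
  refine sum_congr rfl fun x _ => ?_
  have hfiber : ∀ y, f x - f y = c ↔ f y = -c + f x := fun y => by
    rw [sub_eq_iff_eq_add, eq_neg_add_iff_add_eq, eq_comm]
  simp only [hfiber, ← sum_filter, sum_const, hT, one_smul]

theorem sum_filter_sub_eq_snd (hT : ∀ h, #(T.filter (f · = h)) = 1) (c : H) (φ : G → M) :
    ∑ q ∈ (T ×ˢ T).filter (fun q => f q.1 - f q.2 = c), φ q.2 = ∑ y ∈ T, φ y := by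
  rw [sum_filter, sum_product_right]
  refine sum_congr rfl fun y _ => ?_
  simp only [sub_eq_iff_eq_add, ← sum_filter, sum_const, hT, one_smul]

end ResidueSystem

theorem Finset.card_filter_isUnit {M : Type*} [Monoid M] [Fintype M] [DecidableEq M]
    [DecidablePred (IsUnit : M → Prop)] :
    #(univ.filter (IsUnit : M → Prop)) = Fintype.card Mˣ := by
  rw [← card_univ, ← card_map ⟨Units.val, Units.val_injective⟩]
  congr 1
  ext a
  simp [IsUnit]

theorem RingHom.injOn_of_pairwise_isUnit_sub {R K : Type*} [Ring R] [Ring K] [Nontrivial K]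
    (f : R →+* K) {s : Set R} (hs : s.Pairwise fun x y => IsUnit (x - y)) : Set.InjOn f s := by
  intro x hx y hy hxy
  by_contra hne
  have hunit := (hs hx hy hne).map f
  rw [map_sub, hxy, sub_self] at hunit
  exact not_isUnit_zero hunit

-- `d ↦ 2 - d` permutes the fibre over `1`.
theorem two_mul_sum_filter_map_eq_one {R K : Type*} [CommRing R] [Fintype R] [Ring K]
    [DecidableEq K] (f : R →+* K) :
    2 * ∑ d ∈ univ.filter (f · = 1), d = 2 * (#(univ.filter (f · = 1)) : R) := by
  have hsymm : ∑ d ∈ univ.filter (f · = 1), d = ∑ d ∈ univ.filter (f · = 1), (2 - d) :=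
    sum_equiv (Equiv.subLeft 2)
      (fun d => by
        simp only [mem_filter, mem_univ, true_and, Equiv.subLeft_apply, map_sub, map_ofNat]
        rw [sub_eq_iff_eq_add, ← one_add_one_eq_two, add_right_inj, eq_comm])
      (fun d _ => by simp)
  rw [sum_sub_distrib, sum_const, nsmul_eq_mul] at hsymm
  linear_combination hsymm

def IsUnitDifferenceSet {R : Type*} [Ring R] (S : Set R) : Prop :=
  {d : R | ∃ x ∈ S, ∃ y ∈ S, x ≠ y ∧ x - y = d} = {d : R | IsUnit d}

namespace IsUnitDifferenceSet

variable {R : Type*} [Ring R]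

theorem pairwise_isUnit_sub {S : Set R} (h : IsUnitDifferenceSet S) :
    S.Pairwise fun x y => IsUnit (x - y) := fun x hx y hy hxy =>
  (h ▸ ⟨x, hx, y, hy, hxy, rfl⟩ : x - y ∈ {d : R | IsUnit d})

theorem exists_sub_eq {S : Set R} (h : IsUnitDifferenceSet S) {d : R} (hd : IsUnit d) :
    ∃ x ∈ S, ∃ y ∈ S, x ≠ y ∧ x - y = d :=
  (h ▸ hd : d ∈ {d : R | ∃ x ∈ S, ∃ y ∈ S, x ≠ y ∧ x - y = d})

variable [Fintype R] [DecidableEq R] {T : Finset R}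

theorem card_units_le_card_image_sub (h : IsUnitDifferenceSet (T : Set R)) :
    Fintype.card Rˣ ≤ #(T.offDiag.image fun q => q.1 - q.2) := by
  classical
  rw [← card_filter_isUnit]
  refine card_le_card fun d hd => ?_
  obtain ⟨x, hx, y, hy, hxy, rfl⟩ := h.exists_sub_eq (mem_filter.mp hd).2
  exact mem_image.mpr ⟨(x, y), mem_offDiag.mpr ⟨hx, hy, hxy⟩, rfl⟩

theorem card_units_le_card_offDiag (h : IsUnitDifferenceSet (T : Set R)) :
    Fintype.card Rˣ ≤ #T.offDiag :=
  h.card_units_le_card_image_sub.trans card_image_le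

theorem injOn_sub_offDiag (h : IsUnitDifferenceSet (T : Set R))
    (hcard : #T.offDiag ≤ Fintype.card Rˣ) :
    Set.InjOn (fun q : R × R => q.1 - q.2) T.offDiag :=
  card_image_iff.mp <| card_image_le.antisymm (hcard.trans h.card_units_le_card_image_sub)

end IsUnitDifferenceSet

section ZModPrimeSq

variable {p : ℕ} [hp : Fact p.Prime]

local notation "π" => ZMod.castHom (dvd_pow_self p two_ne_zero) (ZMod p)

theorem ZMod.isUnit_iff_castHom_ne_zero {n : ℕ} (hn : n ≠ 0) (d : ZMod (p ^ n)) :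
    IsUnit d ↔ ZMod.castHom (dvd_pow_self p hn) (ZMod p) d ≠ 0 := by
  rw [← ZMod.natCast_zmod_val d, map_natCast,
    ZMod.isUnit_natCast_iff_not_dvd_pow hp.out (Nat.pos_of_ne_zero hn), Ne,
    ZMod.natCast_eq_zero_iff]

theorem ZMod.card_units_prime_sq : Fintype.card (ZMod (p ^ 2))ˣ = p * (p - 1) := by
  rw [ZMod.card_units_eq_totient, Nat.totient_prime_pow_succ hp.out, pow_one]

theorem ZMod.natCast_two_mul_ne_zero_of_odd (hodd : Odd p) : ((2 * p : ℕ) : ZMod (p ^ 2)) ≠ 0 := by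
  rw [Ne, ZMod.natCast_eq_zero_iff, pow_two]
  intro h
  have h2 : p ∣ 2 := Nat.dvd_of_mul_dvd_mul_right hp.out.pos h
  rw [(Nat.prime_dvd_prime_iff_eq hp.out Nat.prime_two).mp h2] at hodd
  exact Nat.not_odd_iff_even.mpr even_two hodd

namespace IsUnitDifferenceSet

variable {T : Finset (ZMod (p ^ 2))} (h : IsUnitDifferenceSet (T : Set (ZMod (p ^ 2))))
include h

theorem card_eq : #T = p := by
  have hle : #T ≤ p := by
    simpa using card_le_card_of_injOn π (fun _ _ => mem_univ _)
      (RingHom.injOn_of_pairwise_isUnit_sub π h.pairwise_isUnit_sub)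
  have hge : p * (p - 1) ≤ #T * (#T - 1) := by
    have := h.card_units_le_card_offDiag
    rwa [ZMod.card_units_prime_sq, offDiag_card, ← Nat.mul_sub_one] at this
  refine hle.antisymm (not_lt.mp fun hlt => hge.not_gt ?_)
  calc #T * (#T - 1) ≤ #T * (p - 1) := Nat.mul_le_mul_left _ (Nat.sub_le_sub_right hle 1)
    _ < p * (p - 1) := Nat.mul_lt_mul_of_pos_right hlt (Nat.sub_pos_of_lt hp.out.one_lt)

theorem card_filter_castHom_eq_one (r : ZMod p) : #(T.filter (π · = r)) = 1 :=
  card_filter_eq_one_of_injOn π (RingHom.injOn_of_pairwise_isUnit_sub π h.pairwise_isUnit_sub)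
    (by rw [h.card_eq, ZMod.card]) r

theorem image_sub_filter_castHom_sub_eq_one :
    ((T ×ˢ T).filter fun q => π q.1 - π q.2 = 1).image (fun q => q.1 - q.2) =
      univ.filter (π · = 1) := by
  ext d
  simp only [mem_image, mem_filter, mem_product, mem_univ, true_and, Prod.exists]
  constructor
  · rintro ⟨x, y, ⟨-, hxy⟩, rfl⟩
    rwa [map_sub]
  · intro hd
    obtain ⟨x, hx, y, hy, -, rfl⟩ :=
      h.exists_sub_eq ((ZMod.isUnit_iff_castHom_ne_zero two_ne_zero _).mpr (by rw [hd]; exact one_ne_zero))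
    exact ⟨x, y, ⟨⟨hx, hy⟩, by rwa [← map_sub]⟩, rfl⟩

theorem injOn_sub_filter_castHom_sub_eq_one :
    Set.InjOn (fun q : ZMod (p ^ 2) × ZMod (p ^ 2) => q.1 - q.2)
      ((T ×ˢ T).filter fun q => π q.1 - π q.2 = 1) := by
  refine (h.injOn_sub_offDiag ?_).mono fun q hq => ?_
  · rw [offDiag_card, h.card_eq, ZMod.card_units_prime_sq, Nat.mul_sub_one]
  · obtain ⟨hq, hq1⟩ := mem_filter.mp hq
    obtain ⟨hx, hy⟩ := mem_product.mp hq
    refine mem_offDiag.mpr ⟨hx, hy, fun heq => zero_ne_one (α := ZMod p) ?_⟩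
    rwa [heq, sub_self] at hq1

end IsUnitDifferenceSet

theorem not_isUnitDifferenceSet (hodd : Odd p) (T : Finset (ZMod (p ^ 2))) :
    ¬ IsUnitDifferenceSet (T : Set (ZMod (p ^ 2))) := by
  intro h
  have hres := h.card_filter_castHom_eq_one
  have hsum : ∑ d ∈ univ.filter (π · = 1), d = 0 := by
    rw [← h.image_sub_filter_castHom_sub_eq_one, sum_image h.injOn_sub_filter_castHom_sub_eq_one,
      sum_sub_distrib, sum_filter_sub_eq_fst π hres 1 fun x => x, sum_filter_sub_eq_snd π hres 1 fun x => x, sub_self]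
  have hcard : #(univ.filter (π · = 1)) = p := by
    rw [← h.image_sub_filter_castHom_sub_eq_one,
      card_image_of_injOn h.injOn_sub_filter_castHom_sub_eq_one, card_eq_sum_ones,
      sum_filter_sub_eq_fst _ hres _ fun _ => 1, ← card_eq_sum_ones, h.card_eq]
  have htwo := two_mul_sum_filter_map_eq_one π
  rw [hsum, hcard, mul_zero] at htwo
  exact ZMod.natCast_two_mul_ne_zero_of_odd hodd (by push_cast; exact htwo.symm)

end ZModPrimeSq

theorem stmt_11 (p : ℕ) (hp : p.Prime) (hodd : Odd p) :
    ¬ ∃ S : Set (ZMod (p ^ 2)),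
        {d : ZMod (p ^ 2) | ∃ x ∈ S, ∃ y ∈ S, x ≠ y ∧ x - y = d} =
          {d : ZMod (p ^ 2) | IsUnit d} := by
  have : Fact p.Prime := ⟨hp⟩
  rintro ⟨S, hS⟩
  obtain ⟨T, rfl⟩ := S.toFinite.exists_finset_coe
  exact not_isUnitDifferenceSet hodd T hS
end

section
/- Let p be an odd prime and suppose S ⊆ ℤ/p²ℤ is a set of p elements, pairwise distinct modulo p, with 0 ∈ S. If every residue class modulo p² coprime to p occurs exactly once as a difference of two distinct elements of S, then we reach a contradiction; in particular no such S exists. -/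
theorem stmt_12 (p : ℕ) (hp : p.Prime) (hodd : Odd p)
    (S : Finset (ZMod (p ^ 2)))
    (hcard : S.card = p)
    (hzero : (0 : ZMod (p ^ 2)) ∈ S)
    (hdistinct : Set.InjOn
      (fun x : ZMod (p ^ 2) => ZMod.castHom (dvd_pow_self p two_ne_zero) (ZMod p) x) ↑S)
    (hdiff : ∀ d : ZMod (p ^ 2), IsUnit d →
      ((S ×ˢ S).filter fun q => q.1 ≠ q.2 ∧ q.1 - q.2 = d).card = 1) :
    False := by
  haveI : Fact p.Prime := ⟨hp⟩
  haveI : NeZero (p ^ 2) := ⟨pow_ne_zero 2 hp.ne_zero⟩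
  have hp1 : 1 < p := hp.one_lt
  set π : ZMod (p ^ 2) →+* ZMod p := ZMod.castHom (dvd_pow_self p two_ne_zero) (ZMod p) with hπ
  have hπval : ∀ x : ZMod (p ^ 2), π x = ((x.val : ℕ) : ZMod p) := by
    intro x
    rw [hπ, ZMod.castHom_apply, ← ZMod.natCast_val]
  -- π is surjective from S
  have himg : S.image (fun x => π x) = Finset.univ := by
    apply Finset.eq_univ_of_card
    rw [Finset.card_image_of_injOn hdistinct, hcard, ZMod.card]
  have hsurj : ∀ j : ZMod p, ∃ a ∈ S, π a = j := by
    intro j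
    have : j ∈ S.image (fun x => π x) := by rw [himg]; exact Finset.mem_univ j
    simpa using this
  have hone : (1 : ZMod p) ≠ 0 := one_ne_zero
  -- units detection
  have hunit : ∀ d : ZMod (p ^ 2), π d = 1 → IsUnit d := by
    intro d hd
    rw [← ZMod.natCast_zmod_val d, ZMod.isUnit_iff_coprime]
    have hnd : ¬ p ∣ d.val := by
      intro h
      have h0 : ((d.val : ℕ) : ZMod p) = 0 := (ZMod.natCast_eq_zero_iff _ p).mpr h
      rw [← hπval d, hd] at h0
      exact hone h0
    exact ((hp.coprime_iff_not_dvd.mpr hnd).symm).pow_right 2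
  -- the pair set D
  set D : Finset (ZMod (p ^ 2) × ZMod (p ^ 2)) :=
    (S ×ˢ S).filter (fun q => π q.1 = π q.2 + 1) with hD
  have hDdiff : ∀ q ∈ D, π (q.1 - q.2) = 1 := by
    intro q hq
    rw [hD, Finset.mem_filter] at hq
    rw [map_sub, hq.2]; ring
  have hDne : ∀ q ∈ D, q.1 ≠ q.2 := by
    intro q hq h
    have := hDdiff q hq
    rw [h, sub_self, map_zero] at this
    exact hone this.symm
  -- injectivity of the difference map on D
  have hDinj : Set.InjOn (fun q : ZMod (p ^ 2) × ZMod (p ^ 2) => q.1 - q.2) ↑D := by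
    intro q hq q' hq' hqq
    rw [Finset.mem_coe] at hq hq'
    have hu : IsUnit (q.1 - q.2) := hunit _ (hDdiff q hq)
    have h1 := hdiff (q.1 - q.2) hu
    have hmq : q ∈ (S ×ˢ S).filter (fun r => r.1 ≠ r.2 ∧ r.1 - r.2 = q.1 - q.2) :=
      Finset.mem_filter.mpr ⟨(Finset.mem_filter.mp hq).1, hDne q hq, rfl⟩
    have hmq' : q' ∈ (S ×ˢ S).filter (fun r => r.1 ≠ r.2 ∧ r.1 - r.2 = q.1 - q.2) :=
      Finset.mem_filter.mpr ⟨(Finset.mem_filter.mp hq').1, hDne q' hq', hqq.symm⟩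
    exact Finset.card_le_one.mp (le_of_eq h1) q hmq q' hmq'
  -- membership in D unfolded
  have hDmem : ∀ q : ZMod (p ^ 2) × ZMod (p ^ 2),
      q ∈ D ↔ q.1 ∈ S ∧ q.2 ∈ S ∧ π q.1 = π q.2 + 1 := by
    intro q
    rw [hD, Finset.mem_filter, Finset.mem_product]
    tauto
  -- projection bijections
  have hsum1 : ∑ q ∈ D, q.1 = ∑ x ∈ S, x := by
    apply Finset.sum_bij (fun q _ => q.1)
    · intro q hq; exact ((hDmem q).mp hq).1
    · intro q hq q' hq' h
      obtain ⟨h1, h2, h3⟩ := (hDmem q).mp hq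
      obtain ⟨h1', h2', h3'⟩ := (hDmem q').mp hq'
      have : π q.2 = π q'.2 := by
        have : π q.2 + 1 = π q'.2 + 1 := by rw [← h3, ← h3', h]
        exact add_right_cancel this
      exact Prod.ext h (hdistinct h2 h2' this)
    · intro a ha
      obtain ⟨b, hb, hbe⟩ := hsurj (π a - 1)
      refine ⟨(a, b), (hDmem (a, b)).mpr ⟨ha, hb, ?_⟩, rfl⟩
      rw [hbe]; ring
    · intro q hq; rfl
  have hsum2 : ∑ q ∈ D, q.2 = ∑ x ∈ S, x := by
    apply Finset.sum_bij (fun q _ => q.2)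
    · intro q hq; exact ((hDmem q).mp hq).2.1
    · intro q hq q' hq' h
      obtain ⟨h1, h2, h3⟩ := (hDmem q).mp hq
      obtain ⟨h1', h2', h3'⟩ := (hDmem q').mp hq'
      have : π q.1 = π q'.1 := by rw [h3, h3', h]
      exact Prod.ext (hdistinct h1 h1' this) h
    · intro b hb
      obtain ⟨a, ha, hae⟩ := hsurj (π b + 1)
      exact ⟨(a, b), (hDmem (a, b)).mpr ⟨ha, hb, hae⟩, rfl⟩
    · intro q hq; rfl
  have hDcard : D.card = p := by
    have hDS : D.card = S.card := by
      apply Finset.card_bij (fun q _ => q.2)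
      · intro q hq; exact ((hDmem q).mp hq).2.1
      · intro q hq q' hq' h
        obtain ⟨h1, h2, h3⟩ := (hDmem q).mp hq
        obtain ⟨h1', h2', h3'⟩ := (hDmem q').mp hq'
        have : π q.1 = π q'.1 := by rw [h3, h3', h]
        exact Prod.ext (hdistinct h1 h1' this) h
      · intro b hb
        obtain ⟨a, ha, hae⟩ := hsurj (π b + 1)
        exact ⟨(a, b), (hDmem (a, b)).mpr ⟨ha, hb, hae⟩, rfl⟩
    rw [hDS, hcard]
  -- the set of differences
  set E : Finset (ZMod (p ^ 2)) := D.image (fun q => q.1 - q.2) with hE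
  have hEcard : E.card = p := by
    rw [hE, Finset.card_image_of_injOn hDinj, hDcard]
  have hEsum : ∑ d ∈ E, d = 0 := by
    rw [hE, Finset.sum_image (fun x hx y hy h => hDinj (Finset.mem_coe.mpr hx) (Finset.mem_coe.mpr hy) h)]
    rw [Finset.sum_sub_distrib, hsum1, hsum2, sub_self]
  -- the kernel fiber
  set K : Finset (ZMod (p ^ 2)) := Finset.univ.filter (fun x => π x = 0) with hK
  have hKim : K = (Finset.range p).image (fun m => ((m * p : ℕ) : ZMod (p ^ 2))) := by
    ext x
    rw [hK, Finset.mem_filter, Finset.mem_image]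
    constructor
    · rintro ⟨-, hx⟩
      rw [hπval] at hx
      obtain ⟨m, hm⟩ := (ZMod.natCast_eq_zero_iff _ p).mp hx
      have hmlt : m < p := by
        have := x.val_lt
        rw [hm, pow_two] at this
        exact lt_of_mul_lt_mul_left this (Nat.zero_le p)
      refine ⟨m, Finset.mem_range.mpr hmlt, ?_⟩
      rw [mul_comm, ← hm, ZMod.natCast_zmod_val]
    · rintro ⟨m, -, rfl⟩
      refine ⟨Finset.mem_univ _, ?_⟩
      rw [map_natCast]
      push_cast
      simp [ZMod.natCast_self]
  have hinjr : Set.InjOn (fun m => ((m * p : ℕ) : ZMod (p ^ 2))) ↑(Finset.range p) := by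
    intro m hm m' hm' h
    rw [Finset.mem_coe, Finset.mem_range] at hm hm'
    have hv : ∀ k : ℕ, k < p → (((k * p : ℕ) : ZMod (p ^ 2))).val = k * p := by
      intro k hk
      apply ZMod.val_cast_of_lt
      rw [pow_two]
      exact (Nat.mul_lt_mul_right hp.pos).mpr hk
    have := congrArg ZMod.val h
    rw [hv m hm, hv m' hm'] at this
    exact Nat.eq_of_mul_eq_mul_right hp.pos this
  have hKcard : K.card = p := by
    rw [hKim, Finset.card_image_of_injOn hinjr, Finset.card_range]
  -- 2 is a unit
  have h2unit : IsUnit (2 : ZMod (p ^ 2)) := by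
    rw [show ((2 : ZMod (p ^ 2))) = ((2 : ℕ) : ZMod (p ^ 2)) by norm_num,
      ZMod.isUnit_iff_coprime]
    exact (Nat.coprime_two_left.mpr hodd).pow_right 2
  have hcancel : ∀ a : ZMod (p ^ 2), a + a = 0 → a = 0 := by
    intro a ha
    rw [← two_mul] at ha
    exact (h2unit.mul_right_eq_zero).mp ha
  have hKsum : ∑ x ∈ K, x = 0 := by
    refine Finset.sum_involution (fun a _ => -a) (fun a ha => add_neg_cancel a)
      (fun a ha hne h => hne (hcancel a (by linear_combination -h))) ?_ (fun a ha => neg_neg a)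
    intro a ha
    rw [hK, Finset.mem_filter] at ha
    show -a ∈ K
    rw [hK, Finset.mem_filter]
    refine ⟨Finset.mem_univ _, ?_⟩
    rw [map_neg, ha.2, neg_zero]
  -- the fiber over 1
  set T : Finset (ZMod (p ^ 2)) := Finset.univ.filter (fun x => π x = 1) with hT
  have hTim : T = K.image (fun x => x + 1) := by
    ext x
    rw [hT, Finset.mem_filter, Finset.mem_image]
    constructor
    · rintro ⟨-, hx⟩
      refine ⟨x - 1, ?_, by ring⟩
      rw [hK, Finset.mem_filter]
      refine ⟨Finset.mem_univ _, ?_⟩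
      rw [map_sub, hx, map_one, sub_self]
    · rintro ⟨y, hy, rfl⟩
      rw [hK, Finset.mem_filter] at hy
      refine ⟨Finset.mem_univ _, ?_⟩
      rw [map_add, hy.2, map_one, zero_add]
  have hTcard : T.card = p := by
    rw [hTim, Finset.card_image_of_injective _ (add_left_injective 1), hKcard]
  have hTsum : ∑ x ∈ T, x = (p : ZMod (p ^ 2)) := by
    rw [hTim, Finset.sum_image (fun x _ y _ h => add_left_injective 1 h),
      Finset.sum_add_distrib, hKsum, Finset.sum_const, hKcard, zero_add,
      nsmul_eq_mul, mul_one]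
  -- E = T
  have hET : E = T := by
    apply Finset.eq_of_subset_of_card_le
    · intro d hd
      rw [hE, Finset.mem_image] at hd
      obtain ⟨q, hq, rfl⟩ := hd
      rw [hT, Finset.mem_filter]
      exact ⟨Finset.mem_univ _, hDdiff q hq⟩
    · rw [hTcard, hEcard]
  -- conclusion
  have hp0 : (p : ZMod (p ^ 2)) = 0 := by rw [← hTsum, ← hET, hEsum]
  have hdvd : p ^ 2 ∣ p := (ZMod.natCast_eq_zero_iff p (p ^ 2)).mp hp0
  have hle : p ^ 2 ≤ p := Nat.le_of_dvd hp.pos hdvd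
  rw [pow_two] at hle
  nlinarith [hp1]
end

section
/- Let p be an odd prime. There exist no subsets S, T ⊆ ℤ/p²ℤ with 0 ∈ S, 0 ∈ T, such that S is not contained in any proper subgroup of ℤ/p²ℤ, T is not contained in any proper subgroup, and S and T are formally dual with respect to the pairing ⟨x,y⟩ = e^{2πi xy/p²} (i.e., for all y, |(1/|S|) ∑_{v ∈ S} e^{2πi vy/p²}|² = (1/|T|)·#{(w,w') ∈ T² : y = w - w'}). -/
/-!
Let `ψ = ZMod.stdAddChar` and `ζ = ψ 1`, a primitive `p²`-th root of unity. Summing the duality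
identity over all `y` (Parseval) gives `|S| |T| = p²`, and primitivity excludes `|S| = 1` and
`|T| = 1`, so `|S| = |T| = p`. At `y = 1` the identity becomes `P(ζ) Q(ζ) = p ν` with
`P = ∑_{v ∈ S} X^v`, `Q = ∑_{v ∈ S} X^(-v)` and `ν ∈ ℕ`, so `Φ_{p²} ∣ P Q - p ν` in `ℤ[X]`.
Modulo `p` we have `Φ_{p²} = (X - 1)^(p² - p)` and `p² - p ≥ 2p` for odd `p`, so
`(X - 1)^p = X^p - 1` divides `P` or `Q` over `𝔽_p`. Reducing exponents modulo `p` turns that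
polynomial into one of degree `< p`, which must vanish; its constant coefficient shows that the
number of `v ∈ S` with `p ∣ v` is a multiple of `p`. That number is positive (`0 ∈ S`) and at most
`|S| = p`, so `S ⊆ pℤ/p²ℤ`, contradicting primitivity.
-/

open Polynomial Finset ZMod

theorem Prime.pow_dvd_or_pow_dvd_of_pow_add_dvd_mul {M : Type*} [CommMonoidWithZero M]
    [IsCancelMulZero M] {π a b : M} (hπ : Prime π) {m n : ℕ} (h : π ^ (m + n) ∣ a * b) :
    π ^ m ∣ a ∨ π ^ n ∣ b := by
  induction m generalizing a with
  | zero => exact .inl (pow_zero π ▸ one_dvd a)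
  | succ m ih =>
    by_cases hπa : π ∣ a
    · obtain ⟨a, rfl⟩ := hπa
      rw [pow_succ', add_right_comm, pow_succ', mul_assoc] at *
      exact (ih ((mul_dvd_mul_iff_left hπ.ne_zero).1 h)).imp (mul_dvd_mul_left π) id
    · exact .inr ((pow_dvd_pow π (Nat.le_add_left n _)).trans (hπ.pow_dvd_of_dvd_mul_left _ hπa h))

theorem Nat.Prime.eq_of_mul_eq_sq {p a b : ℕ} (hp : p.Prime) (h : a * b = p ^ 2) (ha : a ≠ 1)
    (hb : b ≠ 1) : a = p := by
  obtain ⟨k, hk, rfl⟩ := (Nat.dvd_prime_pow hp).1 (Dvd.intro b h)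
  interval_cases k
  · simp at ha
  · simp
  · exact absurd ((mul_eq_left₀ (pow_ne_zero 2 hp.ne_zero)).1 h) hb

theorem pow_sub_one_dvd_pow_sub_pow_mod {R : Type*} [CommRing R] (x : R) (n k : ℕ) :
    x ^ n - 1 ∣ x ^ k - x ^ (k % n) := by
  have h : x ^ k - x ^ (k % n) = x ^ (k % n) * ((x ^ n) ^ (k / n) - 1 ^ (k / n)) := by
    rw [mul_sub, ← pow_mul, ← pow_add, Nat.mod_add_div, one_pow, mul_one]
  exact h ▸ dvd_mul_of_dvd_right (sub_dvd_pow_sub_pow _ _ _) _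

section CharP

variable {p : ℕ} [Fact p.Prime]

theorem dvd_card_filter_of_X_sub_one_pow_dvd {ι : Type*} (S : Finset ι) (g : ι → ℕ)
    (h : (X - 1 : (ZMod p)[X]) ^ p ∣ ∑ i ∈ S, X ^ g i) : p ∣ #{i ∈ S | p ∣ g i} := by
  have hp := (Fact.out : p.Prime)
  rw [sub_pow_char, one_pow] at h
  set R : (ZMod p)[X] := ∑ i ∈ S, X ^ (g i % p)
  have hR : (X ^ p - 1 : (ZMod p)[X]) ∣ R := by
    have : (X ^ p - 1 : (ZMod p)[X]) ∣ ∑ i ∈ S, X ^ g i - R := by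
      rw [← sum_sub_distrib]
      exact dvd_sum fun i _ => pow_sub_one_dvd_pow_sub_pow_mod X p (g i)
    simpa using dvd_sub h this
  have hdeg : R.natDegree < (X ^ p - 1 : (ZMod p)[X]).natDegree := by
    rw [← C_1, natDegree_X_pow_sub_C]
    refine lt_of_le_of_lt (natDegree_sum_le_of_forall_le S _ (n := p - 1) fun i _ => ?_)
      (Nat.sub_lt hp.pos one_pos)
    rw [natDegree_X_pow]
    exact Nat.le_sub_one_of_lt (Nat.mod_lt _ hp.pos)
  have hcoeff : R.coeff 0 = #{i ∈ S | p ∣ g i} := by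
    simp only [R, finsetSum_coeff, coeff_X_pow, Nat.dvd_iff_mod_eq_zero, @eq_comm _ 0]
    simp
  rw [← ZMod.natCast_eq_zero_iff, ← hcoeff, eq_zero_of_dvd_of_natDegree_lt hR hdeg, coeff_zero]

theorem X_sub_one_pow_dvd_map_mul_of_cyclotomic_dvd {F G : ℤ[X]} {c : ℤ} (hc : (p : ℤ) ∣ c)
    (h : cyclotomic (p ^ 2) ℤ ∣ F * G - C c) :
    (X - 1 : (ZMod p)[X]) ^ (p ^ 2 - p) ∣
      F.map (Int.castRingHom (ZMod p)) * G.map (Int.castRingHom (ZMod p)) := by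
  have := Polynomial.map_dvd (Int.castRingHom (ZMod p)) h
  rw [map_cyclotomic_int, ← mul_one (p ^ 2),
    cyclotomic_mul_prime_pow_eq _ (Fact.out : p.Prime).not_dvd_one two_pos, cyclotomic_one] at this
  simpa [(CharP.intCast_eq_zero_iff (ZMod p)[X] p c).2 hc] using this

end CharP

theorem card_ne_one_of_closure_eq_top {G : Type*} [AddGroup G] [Nontrivial G] {S : Finset G}
    (h0 : 0 ∈ S) (hS : AddSubgroup.closure (S : Set G) = ⊤) : #S ≠ 1 := by
  intro h1
  obtain ⟨a, rfl⟩ := card_eq_one.1 h1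
  rw [mem_singleton] at h0
  subst h0
  rw [coe_singleton, AddSubgroup.closure_singleton_zero] at hS
  exact bot_ne_top hS

theorem sum_card_filter_eq_sub_eq_card_mul_card {G : Type*} [AddGroup G] [Fintype G]
    [DecidableEq G] (T : Finset G) : ∑ y, #{w ∈ T ×ˢ T | y = w.1 - w.2} = #T * #T := by
  rw [← card_product, card_eq_sum_card_fiberwise (f := fun w => w.1 - w.2) (t := univ)
    fun _ _ => mem_univ _]
  simp_rw [@eq_comm _ _ (_ - _)]

namespace ZMod

variable {N : ℕ} [NeZero N]

theorem dvd_val_neg_iff {m : ℕ} (hmN : m ∣ N) (v : ZMod N) : m ∣ (-v).val ↔ m ∣ v.val := by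
  simp only [← ZMod.natCast_eq_zero_iff, natCast_val, cast_neg hmN, neg_eq_zero]

theorem closure_ne_top_of_forall_dvd_val {m : ℕ} (hmN : m ∣ N) (hm : m ≠ 1) {S : Set (ZMod N)}
    (h : ∀ v ∈ S, m ∣ v.val) : AddSubgroup.closure S ≠ ⊤ := by
  intro hS
  let H := (castHom hmN (ZMod m)).toAddMonoidHom.ker
  have hSH : AddSubgroup.closure S ≤ H := by
    refine (AddSubgroup.closure_le H).2 fun v hv => ?_
    simpa [H, ← natCast_val, ZMod.natCast_eq_zero_iff] using h v hv
  have h10 : (1 : ZMod m) = 0 := by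
    have := hSH (hS ▸ AddSubgroup.mem_top 1)
    rwa [AddMonoidHom.mem_ker, RingHom.toAddMonoidHom_eq_coe, AddMonoidHom.coe_coe, map_one] at this
  exact hm (ZMod.subsingleton_iff.1 (subsingleton_of_zero_eq_one h10.symm))

theorem stdAddChar_mul_eq_exp (v y : ZMod N) :
    stdAddChar (v * y) = Complex.exp (2 * Real.pi * Complex.I * (v.val * y.val) / N) := by
  rw [← natCast_zmod_val v, ← natCast_zmod_val y, ← Nat.cast_mul, stdAddChar_apply,
    toCircle_natCast]
  push_cast
  simp

theorem stdAddChar_eq_pow (v : ZMod N) : stdAddChar v = stdAddChar (1 : ZMod N) ^ v.val := by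
  rw [← AddChar.map_nsmul_eq_pow, nsmul_one, natCast_zmod_val]

theorem isPrimitiveRoot_stdAddChar_one : IsPrimitiveRoot (stdAddChar (1 : ZMod N)) N := by
  have := stdAddChar_coe (N := N) 1
  push_cast at this
  rw [this, mul_one]
  exact Complex.isPrimitiveRoot_exp N (NeZero.ne N)

theorem sum_norm_sq_sum_stdAddChar (S : Finset (ZMod N)) :
    ∑ y, ‖∑ v ∈ S, stdAddChar (v * y)‖ ^ 2 = N * #S := by
  apply Complex.ofReal_injective
  push_cast
  simp_rw [← Complex.mul_conj', map_sum, ← AddChar.map_neg_eq_conj, sum_mul_sum,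
    ← AddChar.map_add_eq_mul, ← neg_mul, ← add_mul]
  rw [sum_comm]
  refine (sum_congr rfl fun v _ => sum_comm).trans ?_
  simp_rw [mul_comm (_ + -_ : ZMod N), AddChar.sum_mulShift _ (isPrimitive_stdAddChar N),
    add_neg_eq_zero]
  simp [mul_comm]

theorem cyclotomic_dvd_of_norm_sq_sum_stdAddChar_eq (S : Finset (ZMod N)) {c : ℤ}
    (h : ‖∑ v ∈ S, stdAddChar v‖ ^ 2 = c) :
    cyclotomic N ℤ ∣ (∑ v ∈ S, X ^ v.val) * (∑ v ∈ S, X ^ (-v).val) - C c := by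
  have hN := Nat.pos_of_neZero N
  have hζ := isPrimitiveRoot_stdAddChar_one (N := N)
  rw [cyclotomic_eq_minpoly hζ hN]
  refine minpoly.isIntegrallyClosed_dvd (hζ.isIntegral hN) ?_
  simp only [map_sub, map_mul, map_sum, map_pow, aeval_X, aeval_C]
  simp_rw [← stdAddChar_eq_pow, AddChar.map_neg_eq_conj]
  rw [← map_sum (starRingEnd ℂ), Complex.mul_conj', ← Complex.ofReal_pow, h]
  simp

end ZMod

section FormallyDual

variable {N : ℕ} [NeZero N]

def FormallyDual (S T : Finset (ZMod N)) : Prop :=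
  ∀ y, ‖(#S : ℂ)⁻¹ * ∑ v ∈ S, stdAddChar (v * y)‖ ^ 2 =
    (#T : ℝ)⁻¹ * #{w ∈ T ×ˢ T | y = w.1 - w.2}

theorem FormallyDual.card_mul_card {S T : Finset (ZMod N)} (h : FormallyDual S T)
    (hS : S.Nonempty) (hT : T.Nonempty) : #S * #T = N := by
  have hsum := congrArg (fun f : ZMod N → ℝ => ∑ y, f y) (funext h)
  simp only [norm_mul, norm_inv, Complex.norm_natCast, mul_pow, ← mul_sum,
    sum_norm_sq_sum_stdAddChar, ← Nat.cast_sum, sum_card_filter_eq_sub_eq_card_mul_card] at hsum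
  have hS' : (#S : ℝ) ≠ 0 := by positivity
  have hT' : (#T : ℝ) ≠ 0 := by positivity
  field_simp at hsum
  push_cast at hsum
  exact_mod_cast (mul_right_cancel₀ hT' (by linear_combination -hsum) : (#S * #T : ℝ) = N)

theorem FormallyDual.norm_sq_sum_stdAddChar {S T : Finset (ZMod N)} (h : FormallyDual S T)
    (hST : #S = #T) (hS : S.Nonempty) :
    ‖∑ v ∈ S, stdAddChar v‖ ^ 2 = #S * #{w ∈ T ×ˢ T | 1 = w.1 - w.2} := by
  have h1 := h 1
  simp only [mul_one, norm_mul, norm_inv, Complex.norm_natCast, mul_pow, ← hST] at h1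
  have hS' : (#S : ℝ) ≠ 0 := by positivity
  field_simp at h1
  linear_combination h1

end FormallyDual

section PrimeSquare

variable {p : ℕ} [Fact p.Prime]

theorem FormallyDual.X_sub_one_pow_dvd (hp : 3 ≤ p) {S T : Finset (ZMod (p ^ 2))}
    (h : FormallyDual S T) (hS : #S = p) (hT : #T = p) :
    (X - 1 : (ZMod p)[X]) ^ p ∣ ∑ v ∈ S, X ^ v.val ∨
      (X - 1 : (ZMod p)[X]) ^ p ∣ ∑ v ∈ S, X ^ (-v).val := by
  have hS0 : S.Nonempty := card_pos.1 (hS.symm ▸ (Fact.out : p.Prime).pos)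
  have hnorm := h.norm_sq_sum_stdAddChar (hS.trans hT.symm) hS0
  rw [hS] at hnorm
  have hcyc := cyclotomic_dvd_of_norm_sq_sum_stdAddChar_eq S
    (c := p * #{w ∈ T ×ˢ T | 1 = w.1 - w.2}) (by exact_mod_cast hnorm)
  have hmod := X_sub_one_pow_dvd_map_mul_of_cyclotomic_dvd (dvd_mul_right _ _) hcyc
  simp only [Polynomial.map_sum, Polynomial.map_pow, map_X] at hmod
  refine (prime_X_sub_C (1 : ZMod p)).pow_dvd_or_pow_dvd_of_pow_add_dvd_mul ?_
  rw [C_1]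
  exact (pow_dvd_pow _ (Nat.le_sub_of_add_le (by nlinarith))).trans hmod

theorem forall_dvd_val_of_X_sub_one_pow_dvd {S : Finset (ZMod (p ^ 2))} (h0 : 0 ∈ S)
    (hS : #S = p)
    (h : (X - 1 : (ZMod p)[X]) ^ p ∣ ∑ v ∈ S, X ^ v.val ∨
      (X - 1 : (ZMod p)[X]) ^ p ∣ ∑ v ∈ S, X ^ (-v).val) :
    ∀ v ∈ S, p ∣ v.val := by
  have hdvd : p ∣ #{v ∈ S | p ∣ v.val} := by
    rcases h with h | h
    · exact dvd_card_filter_of_X_sub_one_pow_dvd S _ h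
    · simpa only [dvd_val_neg_iff (dvd_pow_self p two_ne_zero)] using
        dvd_card_filter_of_X_sub_one_pow_dvd S _ h
  have hpos : 0 < #{v ∈ S | p ∣ v.val} := card_pos.2 ⟨0, mem_filter.2 ⟨h0, by simp⟩⟩
  have hcard : #{v ∈ S | p ∣ v.val} = #S :=
    le_antisymm (card_filter_le _ _) (by rw [hS]; exact Nat.le_of_dvd hpos hdvd)
  exact fun v hv => filter_card_eq hcard v hv

end PrimeSquare

theorem stmt_13 (p : ℕ) (hp : p.Prime) (hodd : Odd p) :
    ¬ ∃ (S T : Finset (ZMod (p ^ 2))),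
        (0 : ZMod (p ^ 2)) ∈ S ∧ (0 : ZMod (p ^ 2)) ∈ T ∧
        (∀ H : AddSubgroup (ZMod (p ^ 2)), (↑S : Set (ZMod (p ^ 2))) ⊆ H → H = ⊤) ∧
        (∀ H : AddSubgroup (ZMod (p ^ 2)), (↑T : Set (ZMod (p ^ 2))) ⊆ H → H = ⊤) ∧
        (∀ y : ZMod (p ^ 2),
          ‖(S.card : ℂ)⁻¹ * ∑ v ∈ S,
              Complex.exp (2 * Real.pi * Complex.I * (v.val * y.val) / (p ^ 2 : ℕ))‖ ^ 2 =
            (T.card : ℝ)⁻¹ *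
              ((T ×ˢ T).filter fun w => y = w.1 - w.2).card) := by
  rintro ⟨S, T, hS0, hT0, hSprim, hTprim, hdual⟩
  have := Fact.mk hp
  have : Fact (1 < p ^ 2) := ⟨Nat.one_lt_pow two_ne_zero hp.one_lt⟩
  have hp3 : 3 ≤ p := by
    obtain ⟨k, rfl⟩ := hodd
    have := hp.two_le
    omega
  have hS : AddSubgroup.closure (S : Set (ZMod (p ^ 2))) = ⊤ := hSprim _ AddSubgroup.subset_closure
  have hT : AddSubgroup.closure (T : Set (ZMod (p ^ 2))) = ⊤ := hTprim _ AddSubgroup.subset_closure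
  have hST : FormallyDual S T := fun y => by simpa only [stdAddChar_mul_eq_exp] using hdual y
  have hcard := hST.card_mul_card ⟨0, hS0⟩ ⟨0, hT0⟩
  have hS1 := card_ne_one_of_closure_eq_top hS0 hS
  have hT1 := card_ne_one_of_closure_eq_top hT0 hT
  have hSp := hp.eq_of_mul_eq_sq hcard hS1 hT1
  have hTp := hp.eq_of_mul_eq_sq ((mul_comm _ _).trans hcard) hT1 hS1
  refine closure_ne_top_of_forall_dvd_val (dvd_pow_self p two_ne_zero) hp.one_lt.ne' ?_ hS
  exact forall_dvd_val_of_X_sub_one_pow_dvd hS0 hSp (hST.X_sub_one_pow_dvd hp3 hSp hTp)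
end

section
/- Let k be a positive integer, ω = e^{2πi/3}, and let a₀, ..., a_{k-1} ∈ {0,1,2} with a_j ≠ a_{j+1} for all j (indices mod k), so the a_j are not all equal. If (3/k²)·|∑_{j=0}^{k-1} ω^{a_j}|² is a nonnegative integer, then k is divisible by 3. -/
/-!
Let `x, y, z` be the numbers of indices `j` with `a j = 0, 1, 2`, so `x + y + z = k` and the
sum is `x + y ω + z ω²`. Since `conj ω = ω²` and `1 + ω + ω² = 0`, its squared norm is
`k² - 3e` with `e = xy + yz + zx`, hence `(3 - m) k² = 9e` for the integer `m` of the hypothesis.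
Adjacent entries differ, so two of the counts are positive and `e > 0`; thus `0 < 3 - m ≤ 3`,
and `9 ∣ (3 - m) k²` forces `3 ∣ k`.
-/

open Finset ComplexConjugate

lemma IsPrimitiveRoot.conj_eq_sq {ω : ℂ} (hω : IsPrimitiveRoot ω 3) : conj ω = ω ^ 2 := by
  rw [← Complex.inv_eq_conj (hω.norm'_eq_one three_ne_zero)]
  exact inv_eq_of_mul_eq_one_right (by rw [← pow_succ', hω.pow_eq_one])

lemma IsPrimitiveRoot.norm_add_mul_add_mul_sq_sq {ω : ℂ} (hω : IsPrimitiveRoot ω 3) (x y z : ℝ) :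
    ‖(x + y * ω + z * ω ^ 2 : ℂ)‖ ^ 2 = (x + y + z) ^ 2 - 3 * (x * y + y * z + z * x) := by
  have h3 : ω ^ 3 = 1 := hω.pow_eq_one
  have hsum : 1 + ω + ω ^ 2 = 0 := by
    simpa [sum_range_succ] using hω.geom_sum_eq_zero (by norm_num)
  apply Complex.ofReal_injective
  push_cast
  rw [← Complex.mul_conj']
  simp only [map_add, map_mul, map_pow, Complex.conj_ofReal, hω.conj_eq_sq]
  linear_combination (y ^ 2 + z ^ 2 * (ω ^ 3 + 1) + x * z * ω + y * z * (ω ^ 2 + ω)) * h3 +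
    (x * y + y * z + z * x) * hsum

lemma mul_add_mul_add_mul_pos_of_ne {n : Fin 3 → ℕ} {c d : Fin 3} (hcd : c ≠ d)
    (hc : 0 < n c) (hd : 0 < n d) : 0 < n 0 * n 1 + n 1 * n 2 + n 2 * n 0 := by
  fin_cases c <;> fin_cases d <;> simp at hcd hc hd <;> positivity

lemma Int.three_dvd_of_nine_dvd_sq_mul {k r : ℤ} (hr0 : 0 < r) (hr : r < 9)
    (h : 9 ∣ k ^ 2 * r) : 3 ∣ k := by
  by_contra hk
  have hcop : IsCoprime ((3 : ℤ) ^ 2) (k ^ 2) :=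
    ((Int.prime_three.irreducible.coprime_iff_not_dvd).2 hk).pow
  have := Int.le_of_dvd hr0 (hcop.dvd_of_dvd_mul_left (by norm_num; exact h))
  omega

theorem stmt_15 (k : ℕ) [NeZero k] (a : ZMod k → Fin 3)
    (hadj : ∀ j : ZMod k, a j ≠ a (j + 1))
    (hint : ∃ m : ℕ,
      3 / (k : ℝ) ^ 2 *
          ‖∑ j : ZMod k,
            Complex.exp (2 * Real.pi * Complex.I / 3) ^ ((a j : ℕ))‖ ^ 2 = m) :
    3 ∣ k := by
  obtain ⟨m, hm⟩ := hint
  set ω := Complex.exp (2 * Real.pi * Complex.I / 3)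
  have hω : IsPrimitiveRoot ω 3 := by simpa using Complex.isPrimitiveRoot_exp 3 (by norm_num)
  set n : Fin 3 → ℕ := fun c ↦ #{j | a j = c} with hn
  have hk : n 0 + n 1 + n 2 = k := by
    simpa [Fin.sum_univ_three] using
      (card_eq_sum_card_fiberwise (s := univ) (t := univ) (f := a) fun _ _ ↦ mem_univ _).symm
  have hS : ∑ j, ω ^ (a j : ℕ) = n 0 + n 1 * ω + n 2 * ω ^ 2 := by
    rw [← sum_fiberwise' univ a (fun c ↦ ω ^ (c : ℕ))]
    simp [hn, Fin.sum_univ_three]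
  have he : 0 < n 0 * n 1 + n 1 * n 2 + n 2 * n 0 :=
    mul_add_mul_add_mul_pos_of_ne (hadj 0) (card_pos.2 ⟨0, by simp⟩) (card_pos.2 ⟨0 + 1, by simp⟩)
  have hnorm := hω.norm_add_mul_add_mul_sq_sq (n 0) (n 1) (n 2)
  push_cast at hnorm
  rw [hS, hnorm] at hm
  have hk0 : (k : ℝ) ≠ 0 := Nat.cast_ne_zero.2 (NeZero.ne k)
  have key : (k : ℤ) ^ 2 * (3 - m) = 9 * (n 0 * n 1 + n 1 * n 2 + n 2 * n 0 : ℕ) := by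
    rify
    rw [← hm]
    field_simp
    rw [← hk]
    push_cast
    ring
  refine Int.natCast_dvd_natCast.1 (Int.three_dvd_of_nine_dvd_sq_mul ?_ (by omega) ⟨_, key⟩)
  have hpos : (0 : ℤ) < k ^ 2 * (3 - m) := by rw [key]; positivity
  exact pos_of_mul_pos_right hpos (by positivity)
end
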